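/- If y : ℝ → ℝ satisfies the logistic ODE y' = k(y - y²) with k > 0 and 0 < y(0) < 1, then 0 < y(t) < 1 for all t ≥ 0. -/

import Mathlib

lemma sign_preserved (c : ℝ → ℝ) (hc : Continuous c) (u : ℝ → ℝ)
    (hu : Differentiable ℝ u) (hode : ∀ t, deriv u t = c t * u t)
    (h0 : 0 < u 0) : ∀ t, 0 < u t := by
  set F : ℝ → ℝ := fun t => ∫ s in (0:ℝ)..t, c s with hF
  have hFd : ∀ t, HasDerivAt F (c t) t := fun t =>
    (hc.integral_hasStrictDerivAt 0 t).hasDerivAt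
  have key : ∀ t, HasDerivAt (fun t => u t * Real.exp (-F t)) 0 t := by
    intro t
    have h1 : HasDerivAt u (c t * u t) t := by
      rw [← hode t]; exact (hu t).hasDerivAt
    have h2 : HasDerivAt (fun t => Real.exp (-F t)) (Real.exp (-F t) * (-c t)) t := by
      exact (Real.hasDerivAt_exp (-F t)).comp t ((hFd t).neg)
    have : HasDerivAt (fun t => u t * Real.exp (-F t))
        (c t * u t * Real.exp (-F t) + u t * (Real.exp (-F t) * -c t)) t := h1.mul h2
    convert this using 1
    ring
  have hconst : ∀ t, u t * Real.exp (-F t) = u 0 * Real.exp (-F 0) := by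
    intro t
    have := is_const_of_deriv_eq_zero (f := fun t => u t * Real.exp (-F t))
      (fun s => (key s).differentiableAt) (fun s => (key s).deriv) t 0
    exact this
  intro t
  have h := hconst t
  have hF0 : F 0 = 0 := intervalIntegral.integral_same
  rw [hF0] at h
  simp only [neg_zero, Real.exp_zero, mul_one] at h
  have he : 0 < Real.exp (-F t) := Real.exp_pos _
  nlinarith [h, he, h0]

theorem logistic_ode_invariant (k : ℝ) (hk : 0 < k)
    (y : ℝ → ℝ) (hy : Differentiable ℝ y)
    (hode : ∀ t, deriv y t = k * (y t - (y t) ^ 2))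
    (h0 : 0 < y 0 ∧ y 0 < 1) :
    ∀ t ≥ 0, 0 < y t ∧ y t < 1 := by
  have hyc : Continuous y := hy.continuous
  have hpos : ∀ t, 0 < y t := by
    apply sign_preserved (fun t => k * (1 - y t)) (by continuity) y hy
    · intro t; rw [hode t]; ring
    · exact h0.1
  have hlt : ∀ t, 0 < 1 - y t := by
    apply sign_preserved (fun t => -(k * y t)) (by continuity) (fun t => 1 - y t)
    · exact (differentiable_const 1).sub hy
    · intro t
      have : deriv (fun t => 1 - y t) t = -deriv y t := by
        simp [deriv_const_sub]
      rw [this, hode t]; ring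
    · linarith [h0.2]
  intro t _
  exact ⟨hpos t, by linarith [hlt t]⟩
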